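/- Let a₁, a₂, b₁, b₂ ∈ ℂ with a₂ ≠ 0, b₂ = -1/(4a₂) and b₁ = -a₁/(2a₂). Set a(x) = a₁x + a₂x², b(x) = b₁x + b₂x². Define operators on ℂ[x]: A = multiplication by x, B₁(f) = f' + a'f on the source, and X = (f ↦ f' + b'f), Y = multiplication by x on the target. Then the ℂ-linear map T : ℂ[x] → ℂ[x], T(f) = f(X)(1) (i.e. substitute the operator ∂ + b'(x) for x in f and apply to the constant 1), satisfies T∘A = X∘T and T∘B₁ = -Y∘T, and T is bijective. -/

import Mathlib

/-!
The operators `X = ∂ + b'` and multiplication by `x` satisfy the Weyl relation `[X, x] = 1`,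
so `T(f') = [f(X), x](1) = f(X)(x) - x·T(f)`. The choice of `b` makes `a' ∘ b' = -x`, hence
`T(a' f) = f(X)(a'(X)(1)) = f(X)(a' ∘ b') = -f(X)(x)`, and the two terms add up to `-x·T(f)`.
Since `b'` has degree one, `X` raises degrees by exactly one, so `T` preserves degrees; a
degree-preserving linear endomorphism of `K[x]` is injective, and bijective on each
finite-dimensional space of polynomials of degree `< n`.
-/

open Polynomial

/-- The twisted derivative operator `f ↦ f' + p·f` on `ℂ[x]`, as a `ℂ`-linear map. -/
noncomputable def twD (p : Polynomial ℂ) : Module.End ℂ (Polynomial ℂ) :=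
  (derivative : Polynomial ℂ →ₗ[ℂ] Polynomial ℂ) + LinearMap.mulLeft ℂ p

theorem Polynomial.aeval_derivative_of_mul_sub_mul_eq_one {R A : Type*} [CommRing R] [Ring A]
    [Algebra R A] {D Y : A} (hDY : D * Y - Y * D = 1) (f : R[X]) :
    aeval D (derivative f) = aeval D f * Y - Y * aeval D f := by
  induction f using Polynomial.induction_on with
  | C a => simp [Algebra.commutes]
  | add f g hf hg => simp only [map_add, hf, hg]; noncomm_ring
  | monomial n a ih =>
    rw [pow_succ, ← mul_assoc, derivative_mul (g := X), derivative_X, mul_one, map_add,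
      map_mul (aeval D) (derivative _), map_mul (aeval D) _ X, ih, aeval_X]
    linear_combination (norm := noncomm_ring) -aeval D (C a * X ^ n) * hDY

theorem Polynomial.bijective_of_degree_apply_eq {K : Type*} [Field K] (T : K[X] →ₗ[K] K[X])
    (hT : ∀ f, (T f).degree = f.degree) : Function.Bijective T := by
  have hinj : Function.Injective T := by
    rw [← LinearMap.ker_eq_bot, LinearMap.ker_eq_bot']
    intro f hf
    rw [← degree_eq_bot, ← hT, hf, degree_zero]
  refine ⟨hinj, fun q => ?_⟩
  set V := degreeLT K (q.natDegree + 1)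
  have hmaps : ∀ f ∈ V, T f ∈ V := fun f hf => by
    rw [mem_degreeLT, hT]; exact mem_degreeLT.mp hf
  have : FiniteDimensional K V := LinearEquiv.finiteDimensional (degreeLTEquiv K _).symm
  have hsurj : Function.Surjective (T.restrict hmaps) :=
    LinearMap.injective_iff_surjective.mp fun f g hfg => Subtype.ext (hinj congr($hfg.1))
  have hq : q ∈ V :=
    mem_degreeLT.mpr (degree_le_natDegree.trans_lt (by exact_mod_cast q.natDegree.lt_succ_self))
  obtain ⟨f, hf⟩ := hsurj ⟨q, hq⟩
  exact ⟨f, congr($hf.1)⟩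

theorem Polynomial.derivative_C_mul_X_add_C_mul_X_sq {R : Type*} [CommSemiring R] (c d : R) :
    derivative (C c * X + C d * X ^ 2) = C c + C (2 * d) * X := by
  simp only [derivative_add, derivative_C_mul_X, derivative_C_mul_X_pow, C_mul]
  norm_num
  ring

theorem twD_mul_sub_mul_twD (p : ℂ[X]) :
    twD p * LinearMap.mulLeft ℂ X - LinearMap.mulLeft ℂ X * twD p = 1 := by
  refine LinearMap.ext fun g => ?_
  simp only [twD, LinearMap.sub_apply, Module.End.mul_apply, LinearMap.add_apply,
    LinearMap.mulLeft_apply, derivative_mul, derivative_X, Module.End.one_apply]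
  ring

theorem twD_one (p : ℂ[X]) : twD p 1 = p := by simp [twD]

theorem degree_twD {p : ℂ[X]} (hp : p.degree = 1) (g : ℂ[X]) :
    (twD p g).degree = g.degree + 1 := by
  rcases eq_or_ne g 0 with rfl | hg
  · simp
  have hpg : (p * g).degree = g.degree + 1 := by rw [degree_mul, hp, add_comm]
  rw [twD, LinearMap.add_apply, LinearMap.mulLeft_apply, ← hpg]
  refine degree_add_eq_right_of_degree_lt ((degree_derivative_lt hg).trans ?_)
  rw [hpg, degree_eq_natDegree hg]
  exact_mod_cast Nat.lt_succ_self _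

theorem degree_aeval_twD_apply_one {p : ℂ[X]} (hp : p.degree = 1) (f : ℂ[X]) :
    (aeval (twD p) f 1).degree = f.degree := by
  induction f using recOnHorner with
  | M0 => simp
  | MC f c hf0 hc ih =>
    have hT : aeval (twD p) (f + C c) 1 = aeval (twD p) f 1 + C c := by
      rw [map_add, aeval_C, LinearMap.add_apply, Module.algebraMap_end_apply, smul_eq_C_mul,
        mul_one]
    rcases eq_or_ne f 0 with rfl | hf
    · rw [hT, map_zero, LinearMap.zero_apply, zero_add]
    have hpos : 0 < f.degree := by
      by_contra! h
      exact hf (by rw [eq_C_of_degree_le_zero h, hf0, C_0])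
    rw [hT, degree_add_C (ih ▸ hpos), ih, degree_add_C hpos]
  | MX f hf ih =>
    rw [← X_mul, map_mul, aeval_X, Module.End.mul_apply, degree_twD hp, ih, X_mul, degree_mul_X]

theorem aeval_twD_derivative_apply_one (p f : ℂ[X]) :
    aeval (twD p) (derivative f) 1 = aeval (twD p) f X - X * aeval (twD p) f 1 := by
  rw [aeval_derivative_of_mul_sub_mul_eq_one (twD_mul_sub_mul_twD p)]
  simp only [LinearMap.sub_apply, Module.End.mul_apply, LinearMap.mulLeft_apply, mul_one]

theorem aeval_twD_apply_one_of_natDegree_le_one (p : ℂ[X]) {q : ℂ[X]} (hq : q.natDegree ≤ 1) :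
    aeval (twD p) q 1 = q.comp p := by
  rw [eq_X_add_C_of_natDegree_le_one hq]
  simp [twD_one, Algebra.smul_def]

theorem aeval_twD_derivative_add_mul_apply_one {p q : ℂ[X]} (hq : q.natDegree ≤ 1)
    (hqp : q.comp p = -X) (f : ℂ[X]) :
    aeval (twD p) (derivative f + q * f) 1 = -(X * aeval (twD p) f 1) := by
  rw [map_add, LinearMap.add_apply, aeval_twD_derivative_apply_one, mul_comm q, map_mul,
    Module.End.mul_apply, aeval_twD_apply_one_of_natDegree_le_one p hq, hqp, map_neg]
  ring

/-- Let `a₂ ≠ 0`, `b₂ = -1/(4a₂)`, `b₁ = -a₁/(2a₂)`, `a(x) = a₁x + a₂x²`,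
`b(x) = b₁x + b₂x²`. The map `T : ℂ[x] → ℂ[x]`, `T(f) = f(∂ + b'(x))(1)`, intertwines
multiplication by `x` with `X = ∂ + b'` and the twisted derivative `B₁ = ∂ + a'` with
`-x`, and is bijective (realizing `E₊(a) ≅ E₋(b)`). -/
theorem fourier_dual_isomorphism (a₁ a₂ b₁ b₂ : ℂ) (ha : a₂ ≠ 0)
    (hb₂ : b₂ = -1 / (4 * a₂)) (hb₁ : b₁ = -a₁ / (2 * a₂)) :
    let a : Polynomial ℂ := Polynomial.C a₁ * X + Polynomial.C a₂ * X ^ 2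
    let b : Polynomial ℂ := Polynomial.C b₁ * X + Polynomial.C b₂ * X ^ 2
    let Xop : Module.End ℂ (Polynomial ℂ) := twD (derivative b)
    let T : Polynomial ℂ → Polynomial ℂ :=
      fun f => (Polynomial.aeval Xop f) (1 : Polynomial ℂ)
    (∀ f : Polynomial ℂ, T ((X : Polynomial ℂ) * f) = Xop (T f)) ∧
    (∀ f : Polynomial ℂ,
        T (derivative f + derivative a * f) = -((X : Polynomial ℂ) * T f)) ∧
    Function.Bijective T := by
  intro a b Xop T
  have ha' : derivative a = C a₁ + C (2 * a₂) * X := derivative_C_mul_X_add_C_mul_X_sq a₁ a₂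
  have hb' : derivative b = C b₁ + C (2 * b₂) * X := derivative_C_mul_X_add_C_mul_X_sq b₁ b₂
  have hdual : (derivative a).comp (derivative b) = -X := by
    have h0 : a₁ + 2 * a₂ * b₁ = 0 := by rw [hb₁]; field_simp; ring
    have h1 : 2 * a₂ * (2 * b₂) = -1 := by rw [hb₂]; field_simp; ring
    calc (derivative a).comp (derivative b)
        = C (a₁ + 2 * a₂ * b₁) + C (2 * a₂ * (2 * b₂)) * X := by
          rw [ha', hb']; simp only [add_comp, mul_comp, C_comp, X_comp, C_add, C_mul]; ring
      _ = -X := by rw [h0, h1]; simp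
  have hdeg : (derivative b).degree = 1 := by
    have hb₂ne : b₂ ≠ 0 := by rw [hb₂]; simpa using ha
    rw [hb']
    compute_degree!
  refine ⟨fun f => ?_, fun f => ?_, ?_⟩
  · simp only [T, map_mul, aeval_X, Module.End.mul_apply]
  · exact aeval_twD_derivative_add_mul_apply_one (by rw [ha']; compute_degree) hdual f
  · exact bijective_of_degree_apply_eq ((LinearMap.applyₗ 1) ∘ₗ (aeval Xop).toLinearMap)
      (degree_aeval_twD_apply_one hdeg)
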